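/- Periodicity of sign-changing equilibria: let f be C² satisfying f(0)=0, f'(0)=1, u f''(u)<0 for u≠0, and limsup f(u)/u < 0, and let φ ∈ C²([0,π]) solve φ'' + λ f(φ) = 0 with φ(0)=φ(π)=0 having exactly 2j−1 interior zeros (j ≥ 1). Then φ is π/j-periodic on [0,π]: φ(x + π/j) = φ(x) for all x ∈ [0, π − π/j]. -/

import Mathlib

open Real Set Filter Topology

/-!
Solutions of the autonomous equation `φ'' = g(φ)`, with `g` locally Lipschitz and `g 0 = 0`, are
determined by their value and slope at one point. So a nontrivial solution has only simple zeros,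
and if `φ` has the same value and slope at `z` and `w`, then `φ (z + t) = φ (w + t)`.
Conservation of the energy `φ'² - 2 ∫₀^φ g` gives `|φ'|` the same value at all zeros, and `φ'`
changes sign from one zero to the next; hence `φ'` agrees at `z_k` and `z_{k+2}`, the gaps between
consecutive zeros depend only on the parity of their index, and the `2j` gaps filling `[0, π]`
force `z₂ = π / j`. Translation by `z₂` is the claimed periodicity.
-/

theorem ODE_solution_unique_of_mem_Icc_of_locallyLipschitz {E : Type*} [NormedAddCommGroup E]
    [NormedSpace ℝ E] {v : E → E} (hv : LocallyLipschitz v) {F G : ℝ → E} {a b t₀ : ℝ}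
    (ht₀ : t₀ ∈ Icc a b) (hF : ∀ t ∈ Icc a b, HasDerivAt F (v (F t)) t)
    (hG : ∀ t ∈ Icc a b, HasDerivAt G (v (G t)) t) (heq : F t₀ = G t₀) :
    EqOn F G (Icc a b) := by
  have hFc : ContinuousOn F (Icc a b) := HasDerivAt.continuousOn hF
  have hGc : ContinuousOn G (Icc a b) := HasDerivAt.continuousOn hG
  obtain ⟨K, hK⟩ := hv.locallyLipschitzOn.exists_lipschitzOnWith_of_compact
    ((isCompact_Icc.image_of_continuousOn hFc).union (isCompact_Icc.image_of_continuousOn hGc))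
  rw [← Icc_union_Icc_eq_Icc ht₀.1 ht₀.2]
  refine EqOn.union ?_ ?_
  · exact ODE_solution_unique_of_mem_Icc_left (v := fun _ ↦ v) (fun _ _ ↦ hK)
      (hFc.mono (Icc_subset_Icc_right ht₀.2))
      (fun t ht ↦ (hF t ⟨ht.1.le, ht.2.trans ht₀.2⟩).hasDerivWithinAt)
      (fun t ht ↦ Or.inl ⟨t, ⟨ht.1.le, ht.2.trans ht₀.2⟩, rfl⟩)
      (hGc.mono (Icc_subset_Icc_right ht₀.2))
      (fun t ht ↦ (hG t ⟨ht.1.le, ht.2.trans ht₀.2⟩).hasDerivWithinAt)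
      (fun t ht ↦ Or.inr ⟨t, ⟨ht.1.le, ht.2.trans ht₀.2⟩, rfl⟩) heq
  · exact ODE_solution_unique_of_mem_Icc_right (v := fun _ ↦ v) (fun _ _ ↦ hK)
      (hFc.mono (Icc_subset_Icc_left ht₀.1))
      (fun t ht ↦ (hF t ⟨ht₀.1.trans ht.1, ht.2.le⟩).hasDerivWithinAt)
      (fun t ht ↦ Or.inl ⟨t, ⟨ht₀.1.trans ht.1, ht.2.le⟩, rfl⟩)
      (hGc.mono (Icc_subset_Icc_left ht₀.1))
      (fun t ht ↦ (hG t ⟨ht₀.1.trans ht.1, ht.2.le⟩).hasDerivWithinAt)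
      (fun t ht ↦ Or.inr ⟨t, ⟨ht₀.1.trans ht.1, ht.2.le⟩, rfl⟩) heq

variable {g ψ : ℝ → ℝ} {a b : ℝ}

theorem hasDerivAt_phase (hψ : ContDiff ℝ 2 ψ) {x : ℝ} (hx : deriv (deriv ψ) x = g (ψ x)) :
    HasDerivAt (fun t ↦ (ψ t, deriv ψ t)) (deriv ψ x, g (ψ x)) x :=
  (hψ.differentiable two_ne_zero x).hasDerivAt.prodMk
    (hx ▸ (hψ.differentiable_deriv_two x).hasDerivAt)

theorem eqOn_of_deriv_deriv_eq (hg : LocallyLipschitz g) {ψ₁ ψ₂ : ℝ → ℝ}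
    (h₁ : ContDiff ℝ 2 ψ₁) (h₂ : ContDiff ℝ 2 ψ₂)
    (e₁ : ∀ x ∈ Icc a b, deriv (deriv ψ₁) x = g (ψ₁ x))
    (e₂ : ∀ x ∈ Icc a b, deriv (deriv ψ₂) x = g (ψ₂ x)) {t₀ : ℝ} (ht₀ : t₀ ∈ Icc a b)
    (hv : ψ₁ t₀ = ψ₂ t₀) (hd : deriv ψ₁ t₀ = deriv ψ₂ t₀) : EqOn ψ₁ ψ₂ (Icc a b) := by
  have hvf : LocallyLipschitz fun p : ℝ × ℝ ↦ (p.2, g p.1) :=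
    LipschitzWith.prod_snd.locallyLipschitz.prodMk
      (hg.comp LipschitzWith.prod_fst.locallyLipschitz)
  intro x hx
  exact congrArg Prod.fst <| ODE_solution_unique_of_mem_Icc_of_locallyLipschitz hvf ht₀
    (fun t ht ↦ hasDerivAt_phase h₁ (e₁ t ht)) (fun t ht ↦ hasDerivAt_phase h₂ (e₂ t ht))
    (Prod.ext hv hd) hx

theorem comp_add_eq_of_eq_of_deriv_eq (hg : LocallyLipschitz g) (hψ : ContDiff ℝ 2 ψ)
    (hode : ∀ x ∈ Icc a b, deriv (deriv ψ) x = g (ψ x)) {z w t : ℝ}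
    (hz : z ∈ Icc a b) (hw : w ∈ Icc a b) (hv : ψ z = ψ w) (hd : deriv ψ z = deriv ψ w)
    (hzt : z + t ∈ Icc a b) (hwt : w + t ∈ Icc a b) : ψ (z + t) = ψ (w + t) := by
  set c := w - z
  have hshift : ∀ x, deriv (deriv fun y ↦ ψ (y + c)) x = deriv (deriv ψ) (x + c) := by
    intro x
    rw [show (deriv fun y ↦ ψ (y + c)) = fun y ↦ deriv ψ (y + c) from
      funext fun y ↦ deriv_comp_add_const ψ c y]
    exact deriv_comp_add_const (deriv ψ) c x
  have key := eqOn_of_deriv_deriv_eq (a := max a (a - c)) (b := min b (b - c))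
    (ψ₂ := fun y ↦ ψ (y + c)) hg hψ
    (hψ.comp (contDiff_id.add contDiff_const))
    (fun x hx ↦ hode x ⟨le_of_max_le_left hx.1, le_of_le_min_left hx.2⟩)
    (fun x hx ↦ (hshift x).trans (hode _ ⟨by linarith [le_of_max_le_right hx.1],
      by linarith [le_of_le_min_right hx.2]⟩))
    (t₀ := z) ⟨max_le hz.1 (by linarith [hw.1]), le_min hz.2 (by linarith [hw.2])⟩
    (by simp [c, hv]) (by simp [c, deriv_comp_add_const, hd])
    (x := z + t) ⟨max_le hzt.1 (by linarith [hwt.1]), le_min hzt.2 (by linarith [hwt.2])⟩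
  simpa [c, add_right_comm z t] using key

theorem energy_eq (hg : Continuous g) (hψ : ContDiff ℝ 2 ψ)
    (hode : ∀ x ∈ Icc a b, deriv (deriv ψ) x = g (ψ x)) {x : ℝ} (hx : x ∈ Icc a b) :
    deriv ψ x ^ 2 - 2 * ∫ u in (0 : ℝ)..ψ x, g u =
      deriv ψ a ^ 2 - 2 * ∫ u in (0 : ℝ)..ψ a, g u := by
  have hE : ∀ t, HasDerivAt (fun t ↦ deriv ψ t ^ 2 - 2 * ∫ u in (0 : ℝ)..ψ t, g u)
      (2 * deriv ψ t * (deriv (deriv ψ) t - g (ψ t))) t := by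
    intro t
    have hprim : HasDerivAt (fun y ↦ ∫ u in (0 : ℝ)..y, g u) (g (ψ t)) (ψ t) :=
      intervalIntegral.integral_hasDerivAt_right (hg.intervalIntegrable _ _)
        hg.aestronglyMeasurable.stronglyMeasurableAtFilter hg.continuousAt
    refine (((hψ.differentiable_deriv_two t).hasDerivAt.fun_pow 2).sub
      ((hprim.comp t (hψ.differentiable two_ne_zero t).hasDerivAt).const_mul 2)).congr_deriv ?_
    push_cast
    ring
  refine constant_of_has_deriv_right_zero (HasDerivAt.continuousOn fun t _ ↦ hE t)
    (fun t ht ↦ ?_) x hx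
  simpa [hode t (Ico_subset_Icc_self ht)] using (hE t).hasDerivWithinAt

theorem sq_deriv_eq_of_eq (hg : Continuous g) (hψ : ContDiff ℝ 2 ψ)
    (hode : ∀ x ∈ Icc a b, deriv (deriv ψ) x = g (ψ x)) {x y : ℝ} (hx : x ∈ Icc a b)
    (hy : y ∈ Icc a b) (hxy : ψ x = ψ y) : deriv ψ x ^ 2 = deriv ψ y ^ 2 := by
  have := (energy_eq hg hψ hode hx).trans (energy_eq hg hψ hode hy).symm
  rwa [hxy, sub_left_inj] at this

theorem HasDerivAt.eventually_pos_nhdsGT {d z : ℝ} (h : HasDerivAt ψ d z) (hz : ψ z = 0)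
    (hd : 0 < d) : ∀ᶠ x in 𝓝[>] z, 0 < ψ x := by
  have hslope := (hasDerivAt_iff_tendsto_slope.mp h).mono_left
    (nhdsWithin_mono _ fun _ hx ↦ ne_of_gt hx)
  filter_upwards [hslope.eventually (lt_mem_nhds hd), self_mem_nhdsWithin] with x hx hxz
  rw [slope_def_field, hz, sub_zero] at hx
  exact (div_pos_iff_of_pos_right (sub_pos.2 hxz)).mp hx

theorem HasDerivAt.eventually_neg_nhdsLT {d z : ℝ} (h : HasDerivAt ψ d z) (hz : ψ z = 0)
    (hd : 0 < d) : ∀ᶠ x in 𝓝[<] z, ψ x < 0 := by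
  have hslope := (hasDerivAt_iff_tendsto_slope.mp h).mono_left
    (nhdsWithin_mono _ fun _ hx ↦ ne_of_lt hx)
  filter_upwards [hslope.eventually (lt_mem_nhds hd), self_mem_nhdsWithin] with x hx hxz
  rw [slope_def_field, hz, sub_zero] at hx
  exact ((div_pos_iff.mp hx).resolve_left fun h ↦ (sub_neg.2 hxz).not_gt h.2).1

theorem exists_mem_Ioo_eq_zero_of_hasDerivAt {d z w : ℝ} (hzw : z < w)
    (hc : ContinuousOn ψ (Icc z w)) (hz : ψ z = 0) (hw : ψ w = 0) (hdz : HasDerivAt ψ d z)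
    (hdw : HasDerivAt ψ d w) (hd : d ≠ 0) : ∃ x ∈ Ioo z w, ψ x = 0 := by
  wlog hd_pos : 0 < d generalizing ψ d
  · obtain ⟨x, hx, hx0⟩ := this hc.neg (by simp [hz]) (by simp [hw]) hdz.neg hdw.neg
      (neg_ne_zero.2 hd) (neg_pos.2 (lt_of_le_of_ne (not_lt.1 hd_pos) hd))
    exact ⟨x, hx, neg_eq_zero.1 hx0⟩
  obtain ⟨x₁, hψx₁, hx₁⟩ :=
    ((hdz.eventually_pos_nhdsGT hz hd_pos).and (Ioo_mem_nhdsGT hzw)).exists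
  obtain ⟨x₂, hψx₂, hx₂⟩ :=
    ((hdw.eventually_neg_nhdsLT hw hd_pos).and (Ioo_mem_nhdsLT hzw)).exists
  have hsub : uIcc x₁ x₂ ⊆ Ioo z w := ordConnected_Ioo.uIcc_subset hx₁ hx₂
  obtain ⟨x, hx, hx0⟩ := intermediate_value_uIcc (hc.mono (hsub.trans Ioo_subset_Icc_self))
    (mem_uIcc_of_ge hψx₂.le hψx₁.le)
  exact ⟨x, hsub hx, hx0⟩

theorem deriv_ne_zero_of_eq_zero (hg : LocallyLipschitz g) (hg0 : g 0 = 0)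
    (hψ : ContDiff ℝ 2 ψ) (hode : ∀ x ∈ Icc a b, deriv (deriv ψ) x = g (ψ x))
    (hne : ∃ x ∈ Icc a b, ψ x ≠ 0) {z : ℝ} (hz : z ∈ Icc a b) (hz0 : ψ z = 0) :
    deriv ψ z ≠ 0 := by
  intro hd
  obtain ⟨x, hx, hx0⟩ := hne
  exact hx0 <| eqOn_of_deriv_deriv_eq hg hψ contDiff_const hode (fun _ _ ↦ by simp [hg0]) hz
    hz0 (by simpa using hd) hx

structure ConsecutiveZeros (ψ : ℝ → ℝ) (z w : ℝ) : Prop where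
  lt : z < w
  left : ψ z = 0
  right : ψ w = 0
  ne_zero : ∀ x ∈ Ioo z w, ψ x ≠ 0

theorem ConsecutiveZeros.deriv_right_eq_neg {z w : ℝ} (h : ConsecutiveZeros ψ z w)
    (hg : LocallyLipschitz g) (hg0 : g 0 = 0) (hψ : ContDiff ℝ 2 ψ)
    (hode : ∀ x ∈ Icc a b, deriv (deriv ψ) x = g (ψ x)) (hne : ∃ x ∈ Icc a b, ψ x ≠ 0)
    (hz : a ≤ z) (hw : w ≤ b) : deriv ψ w = -deriv ψ z := by
  have hzI : z ∈ Icc a b := ⟨hz, h.lt.le.trans hw⟩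
  have hwI : w ∈ Icc a b := ⟨hz.trans h.lt.le, hw⟩
  refine (eq_or_eq_neg_of_sq_eq_sq _ _ (sq_deriv_eq_of_eq hg.continuous hψ hode hwI hzI
    (h.right.trans h.left.symm))).resolve_left fun hd ↦ ?_
  obtain ⟨x, hx, hx0⟩ := exists_mem_Ioo_eq_zero_of_hasDerivAt h.lt hψ.continuous.continuousOn
    h.left h.right (hψ.differentiable two_ne_zero z).hasDerivAt
    (hd ▸ (hψ.differentiable two_ne_zero w).hasDerivAt)
    (deriv_ne_zero_of_eq_zero hg hg0 hψ hode hne hzI h.left)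
  exact h.ne_zero x hx hx0

theorem ConsecutiveZeros.deriv_eq_of_next {z₀ z₁ z₂ : ℝ} (h₁ : ConsecutiveZeros ψ z₀ z₁)
    (h₂ : ConsecutiveZeros ψ z₁ z₂) (hg : LocallyLipschitz g) (hg0 : g 0 = 0)
    (hψ : ContDiff ℝ 2 ψ) (hode : ∀ x ∈ Icc a b, deriv (deriv ψ) x = g (ψ x))
    (hne : ∃ x ∈ Icc a b, ψ x ≠ 0) (hz₀ : a ≤ z₀) (hz₂ : z₂ ≤ b) :
    deriv ψ z₂ = deriv ψ z₀ := by
  rw [h₂.deriv_right_eq_neg hg hg0 hψ hode hne (hz₀.trans h₁.lt.le) hz₂,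
    h₁.deriv_right_eq_neg hg hg0 hψ hode hne hz₀ (h₂.lt.le.trans hz₂), neg_neg]

theorem ConsecutiveZeros.sub_le_sub {z z' w w' : ℝ} (h : ConsecutiveZeros ψ z z')
    (h' : ConsecutiveZeros ψ w w') (hg : LocallyLipschitz g) (hψ : ContDiff ℝ 2 ψ)
    (hode : ∀ x ∈ Icc a b, deriv (deriv ψ) x = g (ψ x)) (hz : a ≤ z) (hz' : z' ≤ b)
    (hw : a ≤ w) (hw' : w' ≤ b) (hd : deriv ψ z = deriv ψ w) : w' - w ≤ z' - z := by
  by_contra! hlt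
  have hzz' := h.lt
  have hww' := h'.lt
  refine h'.ne_zero (w + (z' - z)) ⟨by linarith, by linarith⟩ ?_
  rw [← comp_add_eq_of_eq_of_deriv_eq hg hψ hode ⟨hz, by linarith⟩ ⟨hw, by linarith⟩
    (h.left.trans h'.left.symm) hd ⟨by linarith, by linarith⟩ ⟨by linarith, by linarith⟩,
    add_sub_cancel, h.right]

theorem ConsecutiveZeros.sub_eq_sub {z z' w w' : ℝ} (h : ConsecutiveZeros ψ z z')
    (h' : ConsecutiveZeros ψ w w') (hg : LocallyLipschitz g) (hψ : ContDiff ℝ 2 ψ)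
    (hode : ∀ x ∈ Icc a b, deriv (deriv ψ) x = g (ψ x)) (hz : a ≤ z) (hz' : z' ≤ b)
    (hw : a ≤ w) (hw' : w' ≤ b) (hd : deriv ψ z = deriv ψ w) : z' - z = w' - w :=
  le_antisymm (h'.sub_le_sub h hg hψ hode hw hw' hz hz' hd.symm)
    (h.sub_le_sub h' hg hψ hode hz hz' hw hw' hd)

theorem sub_eq_mul_of_consecutiveZeros (hg : LocallyLipschitz g) (hg0 : g 0 = 0)
    (hψ : ContDiff ℝ 2 ψ) (hode : ∀ x ∈ Icc a b, deriv (deriv ψ) x = g (ψ x))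
    (hne : ∃ x ∈ Icc a b, ψ x ≠ 0) {z : ℕ → ℝ} {n : ℕ} (hmem : ∀ k ≤ 2 * n, z k ∈ Icc a b)
    (hcons : ∀ k < 2 * n, ConsecutiveZeros ψ (z k) (z (k + 1))) :
    z (2 * n) - z 0 = n * (z 2 - z 0) := by
  have hshift : ∀ k, k + 2 < 2 * n → z (k + 3) - z (k + 2) = z (k + 1) - z k := fun k hk ↦
    (hcons (k + 2) hk).sub_eq_sub (hcons k (by omega)) hg hψ hode (hmem _ (by omega)).1
      (hmem _ (by omega)).2 (hmem _ (by omega)).1 (hmem _ (by omega)).2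
      ((hcons k (by omega)).deriv_eq_of_next (hcons (k + 1) (by omega)) hg hg0 hψ hode hne
        (hmem _ (by omega)).1 (hmem _ (by omega)).2)
  have hpair : ∀ i < n, z (2 * i + 2) - z (2 * i) = z 2 - z 0 := by
    intro i hi
    induction i with
    | zero => rfl
    | succ i ih =>
      have h₁ := hshift (2 * i) (by omega)
      have h₂ := hshift (2 * i + 1) (by omega)
      rw [show 2 * (i + 1) + 2 = 2 * i + 1 + 3 by ring, show 2 * (i + 1) = 2 * i + 2 by ring,
        ← ih (by omega)]
      linarith
  calc z (2 * n) - z 0 = ∑ i ∈ Finset.range n, (z (2 * (i + 1)) - z (2 * i)) :=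
        (Finset.sum_range_sub (fun i ↦ z (2 * i)) n).symm
    _ = ∑ i ∈ Finset.range n, (z 2 - z 0) :=
        Finset.sum_congr rfl fun i hi ↦ hpair i (Finset.mem_range.1 hi)
    _ = n * (z 2 - z 0) := by rw [Finset.sum_const, Finset.card_range, nsmul_eq_mul]

theorem Set.Finite.exists_strictMonoOn_image_Iic_eq {α : Type*} [LinearOrder α] {s : Set α}
    (hs : s.Finite) {n : ℕ} (hn : s.ncard = n + 1) :
    ∃ z : ℕ → α, StrictMonoOn z (Iic n) ∧ z '' Iic n = s := by
  have hcard : hs.toFinset.card = n + 1 := by rwa [← Set.ncard_eq_toFinset_card _ hs]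
  set e := hs.toFinset.orderEmbOfFin hcard
  refine ⟨fun k ↦ e (Fin.clamp k n), fun k hk l hl hkl ↦ e.strictMono ?_, ?_⟩
  · simp only [Fin.clamp, Fin.mk_lt_mk]
    simp only [mem_Iic] at hk hl
    omega
  ext x
  constructor
  · rintro ⟨k, -, rfl⟩
    exact hs.mem_toFinset.1 (Finset.orderEmbOfFin_mem _ _ _)
  · intro hx
    obtain ⟨i, rfl⟩ : x ∈ range e := by
      rw [Finset.range_orderEmbOfFin]
      exact hs.mem_toFinset.2 hx
    refine ⟨i, Nat.lt_succ_iff.1 i.2, congrArg e (Fin.ext ?_)⟩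
    simp [Fin.clamp, Nat.lt_succ_iff.1 i.2]

theorem finite_and_ncard_sep_Icc {p : ℝ → Prop} (hab : a < b) (ha : p a) (hb : p b)
    (hfin : {x ∈ Ioo a b | p x}.Finite) :
    {x ∈ Icc a b | p x}.Finite ∧ {x ∈ Icc a b | p x}.ncard = {x ∈ Ioo a b | p x}.ncard + 2 := by
  have hset : {x ∈ Icc a b | p x} = insert a (insert b {x ∈ Ioo a b | p x}) := by
    ext x
    simp only [mem_ofPred_eq, mem_insert_iff, mem_Icc, mem_Ioo]
    constructor
    · rintro ⟨⟨hax, hxb⟩, hx⟩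
      rcases hax.eq_or_lt with rfl | hax
      · exact Or.inl rfl
      rcases hxb.eq_or_lt with rfl | hxb
      · exact Or.inr (Or.inl rfl)
      exact Or.inr (Or.inr ⟨⟨hax, hxb⟩, hx⟩)
    · rintro (rfl | rfl | ⟨⟨hax, hxb⟩, hx⟩)
      exacts [⟨⟨le_rfl, hab.le⟩, ha⟩, ⟨⟨hab.le, le_rfl⟩, hb⟩, ⟨⟨hax.le, hxb.le⟩, hx⟩]
  rw [hset]
  refine ⟨(hfin.insert b).insert a, ?_⟩
  rw [ncard_insert_of_notMem _ (hfin.insert b), ncard_insert_of_notMem _ hfin]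
  · exact fun h ↦ h.1.2.false
  · rintro (h | h)
    exacts [hab.ne h, h.1.1.false]

theorem exists_consecutiveZeros_seq {n : ℕ} (hfin : {x ∈ Icc a b | ψ x = 0}.Finite)
    (hn : {x ∈ Icc a b | ψ x = 0}.ncard = n + 1) (hab : a ≤ b) (ha : ψ a = 0) (hb : ψ b = 0) :
    ∃ z : ℕ → ℝ, z 0 = a ∧ z n = b ∧ (∀ k ≤ n, z k ∈ Icc a b) ∧
      ∀ k < n, ConsecutiveZeros ψ (z k) (z (k + 1)) := by
  obtain ⟨z, hmono, himage⟩ := hfin.exists_strictMonoOn_image_Iic_eq hn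
  have hmem : ∀ k ≤ n, z k ∈ Icc a b ∧ ψ (z k) = 0 := fun k hk ↦ by
    have hk' := mem_image_of_mem z (mem_Iic.2 hk)
    rwa [himage] at hk'
  have hsurj : ∀ x ∈ Icc a b, ψ x = 0 → ∃ k ≤ n, z k = x := fun x hx hx0 ↦ by
    obtain ⟨k, hk, rfl⟩ : x ∈ z '' Iic n := himage ▸ ⟨hx, hx0⟩
    exact ⟨k, hk, rfl⟩
  have hle : ∀ {k l}, l ≤ n → k ≤ l → z k ≤ z l := fun hl hkl ↦
    hmono.monotoneOn (mem_Iic.2 (hkl.trans hl)) (mem_Iic.2 hl) hkl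
  obtain ⟨i, hi, hia⟩ := hsurj a ⟨le_rfl, hab⟩ ha
  obtain ⟨l, hl, hlb⟩ := hsurj b ⟨hab, le_rfl⟩ hb
  refine ⟨z, le_antisymm (hia ▸ hle hi (Nat.zero_le i)) (hmem 0 (Nat.zero_le n)).1.1,
    le_antisymm (hmem n le_rfl).1.2 (hlb ▸ hle le_rfl hl), fun k hk ↦ (hmem k hk).1,
    fun k hk ↦ ⟨hmono (mem_Iic.2 hk.le) (mem_Iic.2 hk) (lt_add_one k), (hmem k hk.le).2,
      (hmem (k + 1) hk).2, fun x hx hx0 ↦ ?_⟩⟩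
  obtain ⟨m, hm, rfl⟩ := hsurj x ⟨(hmem k hk.le).1.1.trans hx.1.le,
    hx.2.le.trans (hmem (k + 1) hk).1.2⟩ hx0
  rcases le_or_gt m k with hmk | hkm
  · exact (hle hk.le hmk).not_gt hx.1
  · exact (hle hm hkm).not_gt hx.2

theorem stmt18_general (f : ℝ → ℝ) (hf : ContDiff ℝ 2 f) (hf0 : f 0 = 0)
    (lam : ℝ) (j : ℕ) (hj : 1 ≤ j)
    (φ : ℝ → ℝ) (hφ : ContDiff ℝ 2 φ)
    (heq : ∀ x ∈ Set.Icc (0:ℝ) π, deriv (deriv φ) x + lam * f (φ x) = 0)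
    (h0 : φ 0 = 0) (hπ : φ π = 0)
    (hfin : {x ∈ Set.Ioo (0:ℝ) π | φ x = 0}.Finite)
    (hcard : {x ∈ Set.Ioo (0:ℝ) π | φ x = 0}.ncard = 2 * j - 1) :
    ∀ x : ℝ, 0 ≤ x → x ≤ π - π / j → φ (x + π / j) = φ x := by
  set g : ℝ → ℝ := fun u ↦ -(lam * f u)
  have hg : LocallyLipschitz g := (contDiff_const.mul (hf.of_le one_le_two)).neg.locallyLipschitz
  have hg0 : g 0 = 0 := by simp [g, hf0]
  have hode : ∀ x ∈ Icc 0 π, deriv (deriv φ) x = g (φ x) := fun x hx ↦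
    eq_neg_of_add_eq_zero_left (heq x hx)
  have hne : ∃ x ∈ Icc 0 π, φ x ≠ 0 := by
    obtain ⟨x, hx, hx0⟩ := (Ioo_infinite pi_pos).exists_notMem_finite hfin
    exact ⟨x, Ioo_subset_Icc_self hx, fun h ↦ hx0 ⟨hx, h⟩⟩
  obtain ⟨hZfin, hZcard⟩ := finite_and_ncard_sep_Icc (p := fun x ↦ φ x = 0) pi_pos h0 hπ hfin
  obtain ⟨z, hz0, hzπ, hmem, hcons⟩ :=
    exists_consecutiveZeros_seq (n := 2 * j) hZfin (by omega) pi_pos.le h0 hπ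
  have hz2 : z 2 = π / j := by
    have := sub_eq_mul_of_consecutiveZeros hg hg0 hφ hode hne hmem hcons
    rw [hz0, hzπ, sub_zero, sub_zero] at this
    field_simp
    linarith
  have hd := (hcons 0 (by omega)).deriv_eq_of_next (hcons 1 (by omega)) hg hg0 hφ hode hne
    (hmem 0 (by omega)).1 (hmem 2 (by omega)).2
  intro x hx hxπ
  have hπj : 0 < π / j := by positivity
  have := comp_add_eq_of_eq_of_deriv_eq hg hφ hode (hmem 2 (by omega)) (hmem 0 (by omega))
    ((hcons 1 (by omega)).right.trans (hcons 0 (by omega)).left.symm) hd (t := x)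
    (by rw [hz2]; constructor <;> linarith) (by rw [hz0]; constructor <;> linarith)
  rwa [hz0, hz2, zero_add, add_comm] at this

theorem stmt18 (f : ℝ → ℝ) (hf : ContDiff ℝ 2 f) (hf0 : f 0 = 0)
    (hf'0 : deriv f 0 = 1)
    (hconc : ∀ u : ℝ, u ≠ 0 → u * deriv (deriv f) u < 0)
    (hdiss : ∃ β : ℝ, β < 0 ∧ ∃ R : ℝ, 0 < R ∧ ∀ u : ℝ, R ≤ |u| → f u / u ≤ β)
    (lam : ℝ) (hlam : 0 < lam) (j : ℕ) (hj : 1 ≤ j)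
    (φ : ℝ → ℝ) (hφ : ContDiff ℝ 2 φ)
    (heq : ∀ x ∈ Set.Icc (0:ℝ) π, deriv (deriv φ) x + lam * f (φ x) = 0)
    (h0 : φ 0 = 0) (hπ : φ π = 0)
    (hfin : {x ∈ Set.Ioo (0:ℝ) π | φ x = 0}.Finite)
    (hcard : {x ∈ Set.Ioo (0:ℝ) π | φ x = 0}.ncard = 2 * j - 1) :
    ∀ x : ℝ, 0 ≤ x → x ≤ π - π / j → φ (x + π / j) = φ x :=
  stmt18_general f hf hf0 lam j hj φ hφ heq h0 hπ hfin hcard
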